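/- Let F : C → D and G : D → C be functors and η : 𝟭_C → G∘F, ε : F∘G → 𝟭_D natural transformations. The following are equivalent: (1) η and ε satisfy the triangle identities Gε ∘ᵥ ηG = id_G and εF ∘ᵥ Fη = id_F (so that F is left adjoint to G with unit η and counit ε); (2) F is a terminal object in the rewrite category on the alternating words F(GF)ⁿ, and G is a terminal object in the rewrite category on the alternating words G(FG)ⁿ; that is, for every n ≥ 0 there exists an (η,ε)-derivation F(GF)ⁿ → F and any two such derivations are equal, and for every n ≥ 0 there exists an (η,ε)-derivation G(FG)ⁿ → G and any two such derivations are equal. -/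

import Mathlib

open CategoryTheory

namespace AdjRewrite

universe v₁ v₂ u₁ u₂
variable {C : Type u₁} [Category.{v₁} C] {D : Type u₂} [Category.{v₂} D]

/-- `powC F G n` is the alternating composite `(GF)ⁿ : C ⥤ C` (note `F ⋙ G` applies
`F` first, so it is the classical `G∘F`). -/
def powC (F : C ⥤ D) (G : D ⥤ C) : ℕ → (C ⥤ C)
  | 0 => 𝟭 C
  | n + 1 => powC F G n ⋙ (F ⋙ G)

/-- `powD F G n` is the alternating composite `(FG)ⁿ : D ⥤ D`. -/
def powD (F : C ⥤ D) (G : D ⥤ C) : ℕ → (D ⥤ D)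
  | 0 => 𝟭 D
  | n + 1 => powD F G n ⋙ (G ⋙ F)

/-- `aF F G n` is the alternating composite `F(GF)ⁿ : C ⥤ D`. -/
def aF (F : C ⥤ D) (G : D ⥤ C) (n : ℕ) : C ⥤ D := powC F G n ⋙ F

/-- `aG F G n` is the alternating composite `G(FG)ⁿ : D ⥤ C`. -/
def aG (F : C ⥤ D) (G : D ⥤ C) (n : ℕ) : D ⥤ C := powD F G n ⋙ G

theorem powC_add (F : C ⥤ D) (G : D ⥤ C) (m n : ℕ) :
    powC F G (m + n) = powC F G m ⋙ powC F G n := by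
  induction n with
  | zero =>
      show powC F G m = powC F G m ⋙ 𝟭 C
      rw [Functor.comp_id]
  | succ n ih =>
      show powC F G (m + n) ⋙ (F ⋙ G) = powC F G m ⋙ (powC F G n ⋙ (F ⋙ G))
      rw [ih, Functor.assoc]

theorem powD_add (F : C ⥤ D) (G : D ⥤ C) (m n : ℕ) :
    powD F G (m + n) = powD F G m ⋙ powD F G n := by
  induction n with
  | zero =>
      show powD F G m = powD F G m ⋙ 𝟭 D
      rw [Functor.comp_id]
  | succ n ih =>
      show powD F G (m + n) ⋙ (G ⋙ F) = powD F G m ⋙ (powD F G n ⋙ (G ⋙ F))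
      rw [ih, Functor.assoc]

theorem F_powD (F : C ⥤ D) (G : D ⥤ C) (n : ℕ) :
    F ⋙ powD F G n = powC F G n ⋙ F := by
  induction n with
  | zero =>
      show F ⋙ 𝟭 D = 𝟭 C ⋙ F
      rw [Functor.comp_id, Functor.id_comp]
  | succ n ih =>
      show F ⋙ (powD F G n ⋙ (G ⋙ F)) = (powC F G n ⋙ (F ⋙ G)) ⋙ F
      rw [← Functor.assoc, ih]; rfl

theorem G_powC (F : C ⥤ D) (G : D ⥤ C) (n : ℕ) :
    G ⋙ powC F G n = powD F G n ⋙ G := by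
  induction n with
  | zero =>
      show G ⋙ 𝟭 C = 𝟭 D ⋙ G
      rw [Functor.comp_id, Functor.id_comp]
  | succ n ih =>
      show G ⋙ (powC F G n ⋙ (F ⋙ G)) = (powD F G n ⋙ (G ⋙ F)) ⋙ G
      rw [← Functor.assoc, ih]; rfl

theorem aF_eps_dom (F : C ⥤ D) (G : D ⥤ C) (i j : ℕ) :
    aF F G (i + j + 1) = aF F G j ⋙ (G ⋙ F) ⋙ powD F G i :=
  calc aF F G (i + j + 1) = powC F G (j + 1 + i) ⋙ F := by
        rw [aF, show i + j + 1 = j + 1 + i by omega]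
    _ = (powC F G (j + 1) ⋙ powC F G i) ⋙ F := by rw [powC_add]
    _ = powC F G (j + 1) ⋙ (powC F G i ⋙ F) := rfl
    _ = powC F G (j + 1) ⋙ (F ⋙ powD F G i) := by rw [F_powD]
    _ = aF F G j ⋙ (G ⋙ F) ⋙ powD F G i := rfl

theorem aF_eps_cod (F : C ⥤ D) (G : D ⥤ C) (i j : ℕ) :
    aF F G (i + j) = aF F G j ⋙ 𝟭 D ⋙ powD F G i :=
  calc aF F G (i + j) = powC F G (j + i) ⋙ F := by
        rw [aF, show i + j = j + i by omega]
    _ = (powC F G j ⋙ powC F G i) ⋙ F := by rw [powC_add]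
    _ = powC F G j ⋙ (powC F G i ⋙ F) := rfl
    _ = powC F G j ⋙ (F ⋙ powD F G i) := by rw [F_powD]
    _ = aF F G j ⋙ 𝟭 D ⋙ powD F G i := by rw [Functor.id_comp]; rfl

theorem aF_eta_dom (F : C ⥤ D) (G : D ⥤ C) (i j : ℕ) :
    aF F G (i + j) = powC F G j ⋙ 𝟭 C ⋙ aF F G i :=
  calc aF F G (i + j) = powC F G (j + i) ⋙ F := by
        rw [aF, show i + j = j + i by omega]
    _ = (powC F G j ⋙ powC F G i) ⋙ F := by rw [powC_add]
    _ = powC F G j ⋙ 𝟭 C ⋙ aF F G i := by rw [Functor.id_comp]; rfl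

theorem aF_eta_cod (F : C ⥤ D) (G : D ⥤ C) (i j : ℕ) :
    aF F G (i + j + 1) = powC F G j ⋙ (F ⋙ G) ⋙ aF F G i :=
  calc aF F G (i + j + 1) = powC F G (j + 1 + i) ⋙ F := by
        rw [aF, show i + j + 1 = j + 1 + i by omega]
    _ = (powC F G (j + 1) ⋙ powC F G i) ⋙ F := by rw [powC_add]
    _ = powC F G j ⋙ (F ⋙ G) ⋙ aF F G i := rfl

theorem aG_eps_dom (F : C ⥤ D) (G : D ⥤ C) (i j : ℕ) :
    aG F G (i + j + 1) = powD F G j ⋙ (G ⋙ F) ⋙ aG F G i :=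
  calc aG F G (i + j + 1) = powD F G (j + 1 + i) ⋙ G := by
        rw [aG, show i + j + 1 = j + 1 + i by omega]
    _ = (powD F G (j + 1) ⋙ powD F G i) ⋙ G := by rw [powD_add]
    _ = powD F G j ⋙ (G ⋙ F) ⋙ aG F G i := rfl

theorem aG_eps_cod (F : C ⥤ D) (G : D ⥤ C) (i j : ℕ) :
    aG F G (i + j) = powD F G j ⋙ 𝟭 D ⋙ aG F G i :=
  calc aG F G (i + j) = powD F G (j + i) ⋙ G := by
        rw [aG, show i + j = j + i by omega]
    _ = (powD F G j ⋙ powD F G i) ⋙ G := by rw [powD_add]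
    _ = powD F G j ⋙ 𝟭 D ⋙ aG F G i := by rw [Functor.id_comp]; rfl

theorem aG_eta_dom (F : C ⥤ D) (G : D ⥤ C) (i j : ℕ) :
    aG F G (i + j) = aG F G j ⋙ 𝟭 C ⋙ powC F G i :=
  calc aG F G (i + j) = powD F G (j + i) ⋙ G := by
        rw [aG, show i + j = j + i by omega]
    _ = (powD F G j ⋙ powD F G i) ⋙ G := by rw [powD_add]
    _ = powD F G j ⋙ (powD F G i ⋙ G) := rfl
    _ = powD F G j ⋙ (G ⋙ powC F G i) := by rw [G_powC]
    _ = aG F G j ⋙ 𝟭 C ⋙ powC F G i := by rw [Functor.id_comp]; rfl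

theorem aG_eta_cod (F : C ⥤ D) (G : D ⥤ C) (i j : ℕ) :
    aG F G (i + j + 1) = aG F G j ⋙ (F ⋙ G) ⋙ powC F G i :=
  calc aG F G (i + j + 1) = powD F G (j + 1 + i) ⋙ G := by
        rw [aG, show i + j + 1 = j + 1 + i by omega]
    _ = (powD F G (j + 1) ⋙ powD F G i) ⋙ G := by rw [powD_add]
    _ = powD F G (j + 1) ⋙ (powD F G i ⋙ G) := rfl
    _ = powD F G (j + 1) ⋙ (G ⋙ powC F G i) := by rw [G_powC]
    _ = aG F G j ⋙ (F ⋙ G) ⋙ powC F G i := rfl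

/-- The whiskered rule `(FG)ⁱ ε (F(GF)ʲ) : F(GF)^{i+j+1} ⟶ F(GF)^{i+j}`, with
components `(FG)ⁱ(ε_{F(GF)ʲ A})`. -/
def epsRuleF (F : C ⥤ D) (G : D ⥤ C) (ε : G ⋙ F ⟶ 𝟭 D) (i j : ℕ) :
    aF F G (i + j + 1) ⟶ aF F G (i + j) :=
  eqToHom (aF_eps_dom F G i j) ≫
    Functor.whiskerLeft (aF F G j) (Functor.whiskerRight ε (powD F G i)) ≫
      eqToHom (aF_eps_cod F G i j).symm

/-- The whiskered rule `(F(GF)ⁱ) η (GF)ʲ : F(GF)^{i+j} ⟶ F(GF)^{i+j+1}`, with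
components `F(GF)ⁱ(η_{(GF)ʲ A})`. -/
def etaRuleF (F : C ⥤ D) (G : D ⥤ C) (η : 𝟭 C ⟶ F ⋙ G) (i j : ℕ) :
    aF F G (i + j) ⟶ aF F G (i + j + 1) :=
  eqToHom (aF_eta_dom F G i j) ≫
    Functor.whiskerLeft (powC F G j) (Functor.whiskerRight η (aF F G i)) ≫
      eqToHom (aF_eta_cod F G i j).symm

/-- The whiskered rule `(G(FG)ⁱ) ε (FG)ʲ : G(FG)^{i+j+1} ⟶ G(FG)^{i+j}`, with
components `G(FG)ⁱ(ε_{(FG)ʲ A})`. -/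
def epsRuleG (F : C ⥤ D) (G : D ⥤ C) (ε : G ⋙ F ⟶ 𝟭 D) (i j : ℕ) :
    aG F G (i + j + 1) ⟶ aG F G (i + j) :=
  eqToHom (aG_eps_dom F G i j) ≫
    Functor.whiskerLeft (powD F G j) (Functor.whiskerRight ε (aG F G i)) ≫
      eqToHom (aG_eps_cod F G i j).symm

/-- The whiskered rule `(GF)ⁱ η (G(FG)ʲ) : G(FG)^{i+j} ⟶ G(FG)^{i+j+1}`, with
components `(GF)ⁱ(η_{G(FG)ʲ A})`. -/
def etaRuleG (F : C ⥤ D) (G : D ⥤ C) (η : 𝟭 C ⟶ F ⋙ G) (i j : ℕ) :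
    aG F G (i + j) ⟶ aG F G (i + j + 1) :=
  eqToHom (aG_eta_dom F G i j) ≫
    Functor.whiskerLeft (aG F G j) (Functor.whiskerRight η (powC F G i)) ≫
      eqToHom (aG_eta_cod F G i j).symm

/-- `(η,ε)`-derivations between the alternating composites `F(GF)ⁿ : C ⥤ D`:
the smallest class containing identities and all whiskered copies of `η` and `ε`
(by alternating composites, wherever the types match), closed under vertical
composition. -/
inductive DerivF (F : C ⥤ D) (G : D ⥤ C) (η : 𝟭 C ⟶ F ⋙ G) (ε : G ⋙ F ⟶ 𝟭 D) :
    ∀ {a b : ℕ}, (aF F G a ⟶ aF F G b) → Prop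
  | id (n : ℕ) : DerivF F G η ε (𝟙 (aF F G n))
  | eps_rule (i j : ℕ) : DerivF F G η ε (epsRuleF F G ε i j)
  | eta_rule (i j : ℕ) : DerivF F G η ε (etaRuleF F G η i j)
  | comp {a b c : ℕ} {f : aF F G a ⟶ aF F G b} {g : aF F G b ⟶ aF F G c} :
      DerivF F G η ε f → DerivF F G η ε g → DerivF F G η ε (f ≫ g)

/-- `(η,ε)`-derivations between the alternating composites `G(FG)ⁿ : D ⥤ C`. -/
inductive DerivG (F : C ⥤ D) (G : D ⥤ C) (η : 𝟭 C ⟶ F ⋙ G) (ε : G ⋙ F ⟶ 𝟭 D) :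
    ∀ {a b : ℕ}, (aG F G a ⟶ aG F G b) → Prop
  | id (n : ℕ) : DerivG F G η ε (𝟙 (aG F G n))
  | eps_rule (i j : ℕ) : DerivG F G η ε (epsRuleG F G ε i j)
  | eta_rule (i j : ℕ) : DerivG F G η ε (etaRuleG F G η i j)
  | comp {a b c : ℕ} {f : aG F G a ⟶ aG F G b} {g : aG F G b ⟶ aG F G c} :
      DerivG F G η ε f → DerivG F G η ε g → DerivG F G η ε (f ≫ g)

/-!
Contracting every `FG` pair with `ε` gives collapse maps `F(GF)ⁿ ⟶ F` and `G(FG)ⁿ ⟶ G` (on the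
`G` side: collapse `(FG)ⁿ ⟶ 𝟭` in `D`, then apply `G`). Under the triangle identities every rule,
hence every derivation, commutes with them: a rule whose `η` or `ε` lies under `i + 1` outer pairs
is the outer whiskering by `FG` (resp. `GF`) of the rule with `i`, and whiskering preserves
commutation; for `i = 0` the `ε`-rules commute by naturality of `ε` and the `η`-rules by a triangle
identity. So every derivation into `F` or `G` is a collapse map. Conversely `εF ∘ Fη` and
`Gε ∘ ηG` are derivations `F ⟶ F` and `G ⟶ G`, so uniqueness makes them identities.
-/

open Functor

theorem whiskerRight_heq_whiskerRight {A B E : Type*} [Category A] [Category B] [Category E]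
    {S T S' T' : A ⥤ B} (hS : S = S') (hT : T = T') {φ : S ⟶ T} {ψ : S' ⟶ T'} (h : φ ≍ ψ)
    (K : B ⥤ E) : whiskerRight φ K ≍ whiskerRight ψ K := by
  subst hS hT
  rw [eq_of_heq h]

theorem comp_eq_of_heq {X Y : Type*} [Category X] [Category Y] {W : ℕ → X ⥤ Y} {Z : X ⥤ Y}
    (c : ∀ n, W n ⟶ Z) {a b a' b' : ℕ} (ha : a = a') (hb : b = b') {f : W a ⟶ W b}
    {g : W a' ⟶ W b'} (hfg : f ≍ g) (hg : g ≫ c b' = c a') : f ≫ c b = c a := by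
  subst ha hb
  rw [eq_of_heq hfg, hg]

-- The rules are defined as `eqToHom`-conjugates, since e.g. `aF (i + j + 1)` and
-- `aF j ⋙ (G ⋙ F) ⋙ powD i` agree only propositionally; we compare them by `HEq`.
section Rules

variable (F : C ⥤ D) (G : D ⥤ C) (η : 𝟭 C ⟶ F ⋙ G) (ε : G ⋙ F ⟶ 𝟭 D)

theorem epsRuleF_heq (i j : ℕ) :
    epsRuleF F G ε i j ≍ whiskerLeft (aF F G j) (whiskerRight ε (powD F G i)) :=
  (conj_eqToHom_iff_heq _ _ (aF_eps_dom F G i j) (aF_eps_cod F G i j)).mp rfl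

theorem etaRuleF_heq (i j : ℕ) :
    etaRuleF F G η i j ≍ whiskerLeft (powC F G j) (whiskerRight η (aF F G i)) :=
  (conj_eqToHom_iff_heq _ _ (aF_eta_dom F G i j) (aF_eta_cod F G i j)).mp rfl

theorem epsRuleG_heq (i j : ℕ) :
    epsRuleG F G ε i j ≍ whiskerLeft (powD F G j) (whiskerRight ε (aG F G i)) :=
  (conj_eqToHom_iff_heq _ _ (aG_eps_dom F G i j) (aG_eps_cod F G i j)).mp rfl

theorem etaRuleG_heq (i j : ℕ) :
    etaRuleG F G η i j ≍ whiskerLeft (aG F G j) (whiskerRight η (powC F G i)) :=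
  (conj_eqToHom_iff_heq _ _ (aG_eta_dom F G i j) (aG_eta_cod F G i j)).mp rfl

theorem epsRuleF_succ_heq (i j : ℕ) :
    epsRuleF F G ε (i + 1) j ≍ whiskerRight (epsRuleF F G ε i j) (G ⋙ F) :=
  (epsRuleF_heq F G ε (i + 1) j).trans (whiskerRight_heq_whiskerRight (aF_eps_dom F G i j)
    (aF_eps_cod F G i j) (epsRuleF_heq F G ε i j) (G ⋙ F)).symm

theorem etaRuleF_succ_heq (i j : ℕ) :
    etaRuleF F G η (i + 1) j ≍ whiskerRight (etaRuleF F G η i j) (G ⋙ F) :=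
  (etaRuleF_heq F G η (i + 1) j).trans (whiskerRight_heq_whiskerRight (aF_eta_dom F G i j)
    (aF_eta_cod F G i j) (etaRuleF_heq F G η i j) (G ⋙ F)).symm

theorem epsRuleG_succ_heq (i j : ℕ) :
    epsRuleG F G ε (i + 1) j ≍ whiskerRight (epsRuleG F G ε i j) (F ⋙ G) :=
  (epsRuleG_heq F G ε (i + 1) j).trans (whiskerRight_heq_whiskerRight (aG_eps_dom F G i j)
    (aG_eps_cod F G i j) (epsRuleG_heq F G ε i j) (F ⋙ G)).symm

theorem etaRuleG_succ_heq (i j : ℕ) :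
    etaRuleG F G η (i + 1) j ≍ whiskerRight (etaRuleG F G η i j) (F ⋙ G) :=
  (etaRuleG_heq F G η (i + 1) j).trans (whiskerRight_heq_whiskerRight (aG_eta_dom F G i j)
    (aG_eta_cod F G i j) (etaRuleG_heq F G η i j) (F ⋙ G)).symm

end Rules

section Collapse

variable (F : C ⥤ D) (G : D ⥤ C) (η : 𝟭 C ⟶ F ⋙ G) (ε : G ⋙ F ⟶ 𝟭 D)

def collapseF : ∀ n, aF F G n ⟶ aF F G 0
  | 0 => 𝟙 _
  | n + 1 => (whiskerRight (collapseF n) (G ⋙ F) ≫ whiskerLeft F ε : aF F G n ⋙ G ⋙ F ⟶ F)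

def collapseD : ∀ n, powD F G n ⟶ 𝟭 D
  | 0 => 𝟙 _
  | n + 1 => (whiskerRight (collapseD n) (G ⋙ F) ≫ ε : powD F G n ⋙ G ⋙ F ⟶ 𝟭 D)

def collapseG (n : ℕ) : aG F G n ⟶ aG F G 0 := whiskerRight (collapseD F G ε n) G

theorem collapseF_succ (n : ℕ) :
    collapseF F G ε (n + 1) = whiskerLeft (aF F G n) ε ≫ collapseF F G ε n :=
  (whiskerLeft_comp_whiskerRight (collapseF F G ε n) ε).symm

theorem collapseD_succ (n : ℕ) :
    collapseD F G ε (n + 1) = whiskerLeft (powD F G n) ε ≫ collapseD F G ε n :=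
  (whiskerLeft_comp_whiskerRight (collapseD F G ε n) ε).symm

theorem collapseG_zero : collapseG F G ε 0 = 𝟙 _ :=
  whiskerRight_id' G

theorem collapseG_succ (n : ℕ) :
    collapseG F G ε (n + 1) = whiskerRight (whiskerLeft (powD F G n) ε) G ≫ collapseG F G ε n := by
  rw [collapseG, collapseD_succ]
  exact whiskerRight_comp _ _ G

theorem collapseG_succ_eq_whiskerRight (n : ℕ) :
    collapseG F G ε (n + 1) = whiskerRight (collapseG F G ε n) (F ⋙ G) ≫ whiskerRight ε G :=
  whiskerRight_comp _ _ G

theorem whiskerRight_comp_collapseF {a b : ℕ} {r : aF F G a ⟶ aF F G b}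
    (hr : r ≫ collapseF F G ε b = collapseF F G ε a) :
    whiskerRight r (G ⋙ F) ≫ collapseF F G ε (b + 1) = collapseF F G ε (a + 1) := by
  rw [collapseF, collapseF, ← hr, whiskerRight_comp]
  exact (Category.assoc _ _ _).symm

theorem whiskerRight_comp_collapseG {a b : ℕ} {r : aG F G a ⟶ aG F G b}
    (hr : r ≫ collapseG F G ε b = collapseG F G ε a) :
    whiskerRight r (F ⋙ G) ≫ collapseG F G ε (b + 1) = collapseG F G ε (a + 1) := by
  rw [collapseG_succ_eq_whiskerRight, collapseG_succ_eq_whiskerRight, ← hr, whiskerRight_comp]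
  exact (Category.assoc _ _ _).symm

theorem epsRuleF_comp_collapseF :
    ∀ i j, epsRuleF F G ε i j ≫ collapseF F G ε (i + j) = collapseF F G ε (i + j + 1)
  | 0, j => comp_eq_of_heq (collapseF F G ε) (by omega : 0 + j + 1 = j + 1) (by omega : 0 + j = j)
      (epsRuleF_heq F G ε 0 j) (collapseF_succ F G ε j).symm
  | i + 1, j => comp_eq_of_heq (collapseF F G ε) (by omega : i + 1 + j + 1 = i + j + 1 + 1)
      (by omega : i + 1 + j = i + j + 1) (epsRuleF_succ_heq F G ε i j)
      (whiskerRight_comp_collapseF F G ε (epsRuleF_comp_collapseF i j))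

theorem etaRuleF_comp_collapseF (left_triangle : whiskerRight η F ≫ whiskerLeft F ε = 𝟙 F) :
    ∀ i j, etaRuleF F G η i j ≫ collapseF F G ε (i + j + 1) = collapseF F G ε (i + j)
  | 0, j => by
      refine comp_eq_of_heq (collapseF F G ε) (by omega : 0 + j = j) (by omega : 0 + j + 1 = j + 1)
        (etaRuleF_heq F G η 0 j) ?_
      have cancel : (whiskerLeft (powC F G j) (whiskerRight η (aF F G 0)) ≫
          whiskerLeft (aF F G j) ε : aF F G j ⟶ aF F G j) = 𝟙 _ := by
        show whiskerLeft (powC F G j) (whiskerRight η F ≫ whiskerLeft F ε) = _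
        rw [left_triangle]
        rfl
      rw [collapseF_succ]
      exact (Category.assoc _ _ _).symm.trans ((eq_whisker cancel _).trans (Category.id_comp _))
  | i + 1, j => comp_eq_of_heq (collapseF F G ε) (by omega : i + 1 + j = i + j + 1)
      (by omega : i + 1 + j + 1 = i + j + 1 + 1) (etaRuleF_succ_heq F G η i j)
      (whiskerRight_comp_collapseF F G ε (etaRuleF_comp_collapseF left_triangle i j))

theorem epsRuleG_comp_collapseG :
    ∀ i j, epsRuleG F G ε i j ≫ collapseG F G ε (i + j) = collapseG F G ε (i + j + 1)
  | 0, j => comp_eq_of_heq (collapseG F G ε) (by omega : 0 + j + 1 = j + 1) (by omega : 0 + j = j)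
      (epsRuleG_heq F G ε 0 j) (collapseG_succ F G ε j).symm
  | i + 1, j => comp_eq_of_heq (collapseG F G ε) (by omega : i + 1 + j + 1 = i + j + 1 + 1)
      (by omega : i + 1 + j = i + j + 1) (epsRuleG_succ_heq F G ε i j)
      (whiskerRight_comp_collapseG F G ε (epsRuleG_comp_collapseG i j))

theorem etaRuleG_comp_collapseG (right_triangle : whiskerLeft G η ≫ whiskerRight ε G = 𝟙 G) :
    ∀ i j, etaRuleG F G η i j ≫ collapseG F G ε (i + j + 1) = collapseG F G ε (i + j)
  | 0, j => by
      refine comp_eq_of_heq (collapseG F G ε) (by omega : 0 + j = j) (by omega : 0 + j + 1 = j + 1)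
        (etaRuleG_heq F G η 0 j) ?_
      have cancel : (whiskerLeft (aG F G j) (whiskerRight η (powC F G 0)) ≫
          whiskerRight (whiskerLeft (powD F G j) ε) G : aG F G j ⟶ aG F G j) = 𝟙 _ := by
        show whiskerLeft (powD F G j) (whiskerLeft G η ≫ whiskerRight ε G) = _
        rw [right_triangle]
        rfl
      rw [collapseG_succ]
      exact (Category.assoc _ _ _).symm.trans ((eq_whisker cancel _).trans (Category.id_comp _))
  | i + 1, j => comp_eq_of_heq (collapseG F G ε) (by omega : i + 1 + j = i + j + 1)
      (by omega : i + 1 + j + 1 = i + j + 1 + 1) (etaRuleG_succ_heq F G η i j)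
      (whiskerRight_comp_collapseG F G ε (etaRuleG_comp_collapseG right_triangle i j))

end Collapse

section Derivations

variable {F : C ⥤ D} {G : D ⥤ C} {η : 𝟭 C ⟶ F ⋙ G} {ε : G ⋙ F ⟶ 𝟭 D}

theorem DerivF.comp_collapseF (left_triangle : whiskerRight η F ≫ whiskerLeft F ε = 𝟙 F)
    {a b : ℕ} {f : aF F G a ⟶ aF F G b} (hf : DerivF F G η ε f) :
    f ≫ collapseF F G ε b = collapseF F G ε a := by
  induction hf with
  | id n => exact Category.id_comp _
  | eps_rule i j => exact epsRuleF_comp_collapseF F G ε i j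
  | eta_rule i j => exact etaRuleF_comp_collapseF F G η ε left_triangle i j
  | comp _ _ ihf ihg => rw [Category.assoc, ihg, ihf]

theorem DerivG.comp_collapseG (right_triangle : whiskerLeft G η ≫ whiskerRight ε G = 𝟙 G)
    {a b : ℕ} {f : aG F G a ⟶ aG F G b} (hf : DerivG F G η ε f) :
    f ≫ collapseG F G ε b = collapseG F G ε a := by
  induction hf with
  | id n => exact Category.id_comp _
  | eps_rule i j => exact epsRuleG_comp_collapseG F G ε i j
  | eta_rule i j => exact etaRuleG_comp_collapseG F G η ε right_triangle i j
  | comp _ _ ihf ihg => rw [Category.assoc, ihg, ihf]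

theorem DerivF.eq_collapseF (left_triangle : whiskerRight η F ≫ whiskerLeft F ε = 𝟙 F)
    {n : ℕ} {f : aF F G n ⟶ aF F G 0} (hf : DerivF F G η ε f) : f = collapseF F G ε n :=
  (Category.comp_id f).symm.trans (hf.comp_collapseF left_triangle)

theorem DerivG.eq_collapseG (right_triangle : whiskerLeft G η ≫ whiskerRight ε G = 𝟙 G)
    {n : ℕ} {f : aG F G n ⟶ aG F G 0} (hf : DerivG F G η ε f) : f = collapseG F G ε n := by
  simpa only [collapseG_zero, Category.comp_id] using hf.comp_collapseG right_triangle

variable (F G η ε)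

theorem exists_derivF : ∀ n, ∃ f : aF F G n ⟶ aF F G 0, DerivF F G η ε f
  | 0 => ⟨_, DerivF.id 0⟩
  | n + 1 =>
      let ⟨f, hf⟩ := exists_derivF n
      ⟨epsRuleF F G ε n 0 ≫ f, (DerivF.eps_rule n 0).comp hf⟩

theorem exists_derivG : ∀ n, ∃ f : aG F G n ⟶ aG F G 0, DerivG F G η ε f
  | 0 => ⟨_, DerivG.id 0⟩
  | n + 1 =>
      let ⟨f, hf⟩ := exists_derivG n
      ⟨epsRuleG F G ε n 0 ≫ f, (DerivG.eps_rule n 0).comp hf⟩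

end Derivations

/-- **Theorem 4.6 of Kozen, "Natural Transformations as Rewrite Rules and Monad
Composition"** (characterization of adjunctions by rewrite categories).

Let `F : C ⥤ D`, `G : D ⥤ C` be functors and `η : 𝟭_C ⟶ GF` (Mathlib: `F ⋙ G`),
`ε : FG ⟶ 𝟭_D` (Mathlib: `G ⋙ F`) natural transformations.  The following are
equivalent:

1. `η` and `ε` satisfy the triangle identities `Gε ∘ᵥ ηG = id_G` and
   `εF ∘ᵥ Fη = id_F` (so `F ⊣ G` with unit `η` and counit `ε`); here
   `ηG = whiskerLeft G η`, `Gε = whiskerRight ε G`, `Fη = whiskerRight η F`,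
   `εF = whiskerLeft F ε`, and `∘ᵥ` is `≫` read backwards;
2. `F` is terminal in the rewrite category on the alternating words `F(GF)ⁿ`, and
   `G` is terminal in the rewrite category on the alternating words `G(FG)ⁿ`:
   for every `n ≥ 0` there is an `(η,ε)`-derivation `F(GF)ⁿ ⟶ F` and any two such
   derivations are equal, and likewise for `G(FG)ⁿ ⟶ G`. -/
theorem adjunction_iff_terminal
    (F : C ⥤ D) (G : D ⥤ C) (η : 𝟭 C ⟶ F ⋙ G) (ε : G ⋙ F ⟶ 𝟭 D) :
    (Functor.whiskerLeft G η ≫ Functor.whiskerRight ε G = 𝟙 G ∧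
      Functor.whiskerRight η F ≫ Functor.whiskerLeft F ε = 𝟙 F)
      ↔
    ((∀ n : ℕ, ∃ f : aF F G n ⟶ aF F G 0, DerivF F G η ε f) ∧
      (∀ n : ℕ, ∀ f g : aF F G n ⟶ aF F G 0,
        DerivF F G η ε f → DerivF F G η ε g → f = g) ∧
      (∀ n : ℕ, ∃ f : aG F G n ⟶ aG F G 0, DerivG F G η ε f) ∧
      (∀ n : ℕ, ∀ f g : aG F G n ⟶ aG F G 0,
        DerivG F G η ε f → DerivG F G η ε g → f = g)) := by
  constructor
  · rintro ⟨right_triangle, left_triangle⟩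
    exact ⟨exists_derivF F G η ε,
      fun n f g hf hg => (hf.eq_collapseF left_triangle).trans (hg.eq_collapseF left_triangle).symm,
      exists_derivG F G η ε,
      fun n f g hf hg => (hf.eq_collapseG right_triangle).trans (hg.eq_collapseG right_triangle).symm⟩
  · rintro ⟨-, uniqueF, -, uniqueG⟩
    have hG := uniqueG 0 _ _ ((DerivG.eta_rule 0 0).comp (DerivG.eps_rule 0 0)) (DerivG.id 0)
    have hF := uniqueF 0 _ _ ((DerivF.eta_rule 0 0).comp (DerivF.eps_rule 0 0)) (DerivF.id 0)
    rw [eq_of_heq (etaRuleG_heq F G η 0 0), eq_of_heq (epsRuleG_heq F G ε 0 0)] at hG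
    rw [eq_of_heq (etaRuleF_heq F G η 0 0), eq_of_heq (epsRuleF_heq F G ε 0 0)] at hF
    exact ⟨hG, hF⟩

end AdjRewrite
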